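/- arXiv:2307.12768 — 2 statements merged into one kernel-verified Lean document; each statement's English description precedes it below -/
import Mathlib

section
/- Let N ≥ 1, let z_0, …, z_N, p_1, …, p_N be complex numbers that are pairwise distinct (the z's pairwise distinct, the p's pairwise distinct, and no z equals a p), let t be a nonzero real number and x a complex number. Then there exist unique complex numbers λ, μ_1, …, μ_N such that λ + ∑_{j=1}^{N} μ_j/(z_k − p_j) = (z_k − x)/(2t) for every k = 0, …, N, and moreover λ = (1/(2t)) (∑_{α=0}^{N} z_α − ∑_{j=1}^{N} p_j − x). -/
/-!
Clearing denominators, `λ + ∑ⱼ μⱼ / (X - pⱼ)` becomes `P / Q` with `Q = ∏ⱼ (X - pⱼ)` and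
`P = λ Q + ∑ⱼ μⱼ ∏_{i ≠ j} (X - pᵢ)` of degree at most `N`, whose `X^N` coefficient is `λ`.
A solution of the homogeneous system makes `P` vanish at the `N + 1` points `zₖ`, so `P = 0`;
evaluating at `pⱼ` gives `μⱼ = 0`, and then `λ = 0`. Injectivity of this square system gives
unique solvability. For the right-hand side `c (zₖ - x)` the same degree count gives
`P = c ((X - x) Q - ∏ₖ (X - zₖ))`, and comparing `X^N` coefficients yields `λ`.
-/

open Polynomial Finset Lagrange

theorem Polynomial.IsMonicOfDegree.coeff_eq_nextCoeff {R : Type*} [Semiring R] {f : R[X]} {n : ℕ}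
    (hf : IsMonicOfDegree f (n + 1)) : f.coeff n = f.nextCoeff := by
  rw [nextCoeff_of_natDegree_pos (by rw [hf.natDegree_eq]; omega), hf.natDegree_eq,
    Nat.add_sub_cancel]

theorem Lagrange.isMonicOfDegree_nodal {R ι : Type*} [CommRing R] [Nontrivial R] (s : Finset ι)
    (v : ι → R) : IsMonicOfDegree (nodal s v) #s :=
  ⟨natDegree_nodal, nodal_monic⟩

theorem Lagrange.nextCoeff_nodal {R ι : Type*} [CommRing R] (s : Finset ι) (v : ι → R) :
    (nodal s v).nextCoeff = -∑ i ∈ s, v i :=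
  prod_X_sub_C_nextCoeff v

variable {K ι κ : Type*} [Field K] [Fintype κ]

section Numerator

variable [DecidableEq κ]

noncomputable def partialFractionNumerator (p : κ → K) (l : K) (μ : κ → K) : K[X] :=
  C l * nodal univ p + ∑ j, C (μ j) * nodal (univ.erase j) p

variable (p : κ → K) (l : K) (μ : κ → K)

theorem eval_partialFractionNumerator {w : K} (hw : ∀ j, w ≠ p j) :
    (partialFractionNumerator p l μ).eval w =
      (l + ∑ j, μ j / (w - p j)) * (nodal univ p).eval w := by
  simp only [partialFractionNumerator, eval_add, eval_mul, eval_C, eval_finsetSum, add_mul,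
    sum_mul]
  congr 1
  refine sum_congr rfl fun j _ => ?_
  rw [nodal_eq_mul_nodal_erase (mem_univ j), eval_mul, eval_sub, eval_X, eval_C]
  field_simp [sub_ne_zero.mpr (hw j)]

theorem eval_partialFractionNumerator_node (j : κ) :
    (partialFractionNumerator p l μ).eval (p j) = μ j * (nodal (univ.erase j) p).eval (p j) := by
  rw [partialFractionNumerator, eval_add, eval_mul, eval_nodal_at_node (mem_univ j), mul_zero,
    zero_add, eval_finsetSum, sum_eq_single j]
  · rw [eval_mul, eval_C]
  · intro i _ hij
    rw [eval_mul, eval_nodal_at_node (mem_erase.mpr ⟨Ne.symm hij, mem_univ j⟩), mul_zero]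
  · exact fun hj => absurd (mem_univ j) hj

theorem natDegree_nodal_erase_lt (j : κ) :
    (nodal (univ.erase j) p).natDegree < Fintype.card κ := by
  rw [natDegree_nodal, card_erase_of_mem (mem_univ j), card_univ]
  exact Nat.sub_lt (Fintype.card_pos_iff.mpr ⟨j⟩) one_pos

theorem natDegree_partialFractionNumerator_le :
    (partialFractionNumerator p l μ).natDegree ≤ Fintype.card κ := by
  refine (natDegree_add_le _ _).trans (max_le ?_ ?_)
  · exact (natDegree_C_mul_le _ _).trans (by rw [natDegree_nodal, card_univ])
  · exact natDegree_sum_le_of_forall_le _ _ fun j _ =>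
      (natDegree_C_mul_le _ _).trans (natDegree_nodal_erase_lt p j).le

theorem coeff_partialFractionNumerator_card :
    (partialFractionNumerator p l μ).coeff (Fintype.card κ) = l := by
  rw [partialFractionNumerator, coeff_add, coeff_C_mul, finsetSum_coeff, sum_eq_zero, add_zero]
  · rw [← card_univ, ← natDegree_nodal (v := p), nodal_monic.coeff_natDegree, mul_one]
  · exact fun j _ => by
      rw [coeff_C_mul, coeff_eq_zero_of_natDegree_lt (natDegree_nodal_erase_lt p j), mul_zero]

end Numerator

def partialFractionEval (z : ι → K) (p : κ → K) : K × (κ → K) →ₗ[K] ι → K where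
  toFun a k := a.1 + ∑ j, a.2 j / (z k - p j)
  map_add' a b := by
    funext k
    simp only [Prod.fst_add, Prod.snd_add, Pi.add_apply, add_div, sum_add_distrib]
    ring
  map_smul' c a := by
    funext k
    simp only [Prod.smul_fst, Prod.smul_snd, Pi.smul_apply, smul_eq_mul, RingHom.id_apply,
      mul_add, mul_sum, mul_div_assoc]

@[simp]
theorem partialFractionEval_apply (z : ι → K) (p : κ → K) (a : K × (κ → K)) (k : ι) :
    partialFractionEval z p a k = a.1 + ∑ j, a.2 j / (z k - p j) :=
  rfl

section Solutions

variable [Fintype ι] {z : ι → K} {p : κ → K}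

theorem partialFractionEval_injective (hz : Function.Injective z) (hp : Function.Injective p)
    (hzp : ∀ k j, z k ≠ p j) (hcard : Fintype.card κ < Fintype.card ι) :
    Function.Injective (partialFractionEval z p) := by
  classical
  refine (injective_iff_map_eq_zero _).mpr fun ⟨l, μ⟩ h => ?_
  have hsolves (k : ι) : l + ∑ j, μ j / (z k - p j) = 0 := congrFun h k
  have hnum : partialFractionNumerator p l μ = 0 :=
    eq_zero_of_natDegree_lt_card_of_eval_eq_zero _ hz
      (fun k => by rw [eval_partialFractionNumerator p l μ (hzp k), hsolves, zero_mul])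
      ((natDegree_partialFractionNumerator_le p l μ).trans_lt hcard)
  have hμ : μ = 0 := funext fun j => by
    have hnode := eval_partialFractionNumerator_node p l μ j
    rw [hnum, eval_zero, eq_comm, mul_eq_zero] at hnode
    refine hnode.resolve_right (eval_nodal_not_at_node fun i hi => ?_)
    exact fun hji => (mem_erase.mp hi).1 (hp hji).symm
  have hl : l = 0 := by
    rw [← coeff_partialFractionNumerator_card p l μ, hnum, coeff_zero]
  rw [hl, hμ, Prod.mk_zero_zero]

theorem partialFractionEval_bijective (hz : Function.Injective z) (hp : Function.Injective p)
    (hzp : ∀ k j, z k ≠ p j) (hcard : Fintype.card ι = Fintype.card κ + 1) :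
    Function.Bijective (partialFractionEval z p) := by
  have hinj := partialFractionEval_injective hz hp hzp (by omega)
  refine ⟨hinj, (LinearMap.injective_iff_surjective_of_finrank_eq_finrank ?_).mp hinj⟩
  simp [hcard, add_comm]

theorem fst_eq_of_partialFractionEval_eq (hz : Function.Injective z) (hzp : ∀ k j, z k ≠ p j)
    (hcard : Fintype.card ι = Fintype.card κ + 1) {c x : K} {a : K × (κ → K)}
    (ha : partialFractionEval z p a = fun k => c * (z k - x)) :
    a.1 = c * (∑ k, z k - ∑ j, p j - x) := by
  classical
  obtain ⟨l, μ⟩ := a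
  have hsolves (k : ι) : l + ∑ j, μ j / (z k - p j) = c * (z k - x) := congrFun ha k
  set A := (X - C x) * nodal univ p
  set B := nodal univ z
  have hA : IsMonicOfDegree A (Fintype.card κ + 1) := by
    rw [add_comm]; exact (isMonicOfDegree_X_sub_one x).mul (isMonicOfDegree_nodal univ p)
  have hB : IsMonicOfDegree B (Fintype.card κ + 1) := hcard ▸ isMonicOfDegree_nodal univ z
  have hnum : partialFractionNumerator p l μ = C c * (A - B) := by
    refine eq_of_natDegree_lt_card_of_eval_eq _ _ hz (fun k => ?_) ?_
    · rw [eval_partialFractionNumerator p l μ (hzp k), hsolves]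
      simp only [A, B, eval_mul, eval_sub, eval_C, eval_X, eval_nodal_at_node (mem_univ k)]
      ring
    · refine max_lt ((natDegree_partialFractionNumerator_le p l μ).trans_lt (by omega)) ?_
      exact (natDegree_C_mul_le _ _).trans_lt (hcard ▸ hA.natDegree_sub_lt (by omega) hB)
  have hcoeff := congrArg (coeff · (Fintype.card κ)) hnum
  simp only [coeff_partialFractionNumerator_card, coeff_C_mul, coeff_sub] at hcoeff
  rw [hcoeff, hA.coeff_eq_nextCoeff, hB.coeff_eq_nextCoeff,
    (monic_X_sub_C x).nextCoeff_mul nodal_monic, nextCoeff_X_sub_C, nextCoeff_nodal,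
    nextCoeff_nodal]
  ring

end Solutions

theorem linear_system_unique_solution_general (N : ℕ)
    (z : Fin (N + 1) → ℂ) (p : Fin N → ℂ)
    (hz : Function.Injective z) (hp : Function.Injective p)
    (hzp : ∀ k j, z k ≠ p j)
    (t : ℝ) (x : ℂ) :
    (∃! lm : ℂ × (Fin N → ℂ),
        ∀ k, lm.1 + ∑ j, lm.2 j / (z k - p j) = (z k - x) / (2 * (t : ℂ))) ∧
    (∀ lm : ℂ × (Fin N → ℂ),
        (∀ k, lm.1 + ∑ j, lm.2 j / (z k - p j) = (z k - x) / (2 * (t : ℂ))) →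
        lm.1 = (1 / (2 * (t : ℂ))) * ((∑ k, z k) - (∑ j, p j) - x)) := by
  have hcard : Fintype.card (Fin (N + 1)) = Fintype.card (Fin N) + 1 := by simp
  have hsystem (lm : ℂ × (Fin N → ℂ)) :
      (∀ k, lm.1 + ∑ j, lm.2 j / (z k - p j) = (z k - x) / (2 * (t : ℂ))) ↔
        partialFractionEval z p lm = fun k => 1 / (2 * (t : ℂ)) * (z k - x) := by
    simp only [funext_iff, partialFractionEval_apply, one_div_mul_eq_div]
  simp_rw [hsystem]
  exact ⟨(partialFractionEval_bijective hz hp hzp hcard).existsUnique _,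
    fun lm => fst_eq_of_partialFractionEval_eq hz hzp hcard⟩

/-- Unique solvability of the linear system
`λ + ∑_j μ_j/(z_k − p_j) = (z_k − x)/(2t)`, `k = 0, …, N`, together with the
explicit value of `λ`. -/
theorem linear_system_unique_solution (N : ℕ) (hN : 1 ≤ N)
    (z : Fin (N + 1) → ℂ) (p : Fin N → ℂ)
    (hz : Function.Injective z) (hp : Function.Injective p)
    (hzp : ∀ k j, z k ≠ p j)
    (t : ℝ) (ht : t ≠ 0) (x : ℂ) :
    (∃! lm : ℂ × (Fin N → ℂ),
        ∀ k, lm.1 + ∑ j, lm.2 j / (z k - p j) = (z k - x) / (2 * (t : ℂ))) ∧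
    (∀ lm : ℂ × (Fin N → ℂ),
        (∀ k, lm.1 + ∑ j, lm.2 j / (z k - p j) = (z k - x) / (2 * (t : ℂ))) →
        lm.1 = (1 / (2 * (t : ℂ))) * ((∑ k, z k) - (∑ j, p j) - x)) :=
  linear_system_unique_solution_general N z p hz hp hzp t x
end

section
/- Let g : ℝ → ℝ be continuously differentiable with g(y) → 0 as y → ±∞, and let φ : ℝ → ℝ be continuous with compact support. Then ∫_ℝ g′(y)·φ(y + g(y)) dy = ∫_ℝ φ(s) ds − ∫_ℝ φ(y + g(y)) dy. -/
open Filter MeasureTheory Topology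

/-!
With `u y = y + g y`, the function `y ↦ ∫₀^{u y} φ` is a primitive of `(1 + g') · (φ ∘ u)`. Since
`g → 0`, `u` tends to `±∞` at `±∞`, so this primitive tends to `∫_{0}^{∞} φ` and `-∫_{-∞}^{0} φ`:
the whole-line change of variables `∫ (1 + g') · (φ ∘ u) = ∫ φ` holds although `u` need not be
injective. Expanding `1 + g'` gives the identity.
-/

theorem HasCompactSupport.comp_tendsto_cocompact {X Y M : Type*} [TopologicalSpace X] [T2Space X]
    [TopologicalSpace Y] [Zero M] {f : Y → M} (hf : HasCompactSupport f) {u : X → Y}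
    (hu : Tendsto u (cocompact X) (cocompact Y)) : HasCompactSupport (f ∘ u) := by
  rw [hasCompactSupport_iff_eventuallyEq, coclosedCompact_eq_cocompact]
  rw [hasCompactSupport_iff_eventuallyEq] at hf
  exact hu.eventually (hf.filter_mono cocompact_le_coclosedCompact)

theorem Real.tendsto_cocompact_of_tendsto_atBot_atTop {u : ℝ → ℝ}
    (hbot : Tendsto u atBot atBot) (htop : Tendsto u atTop atTop) :
    Tendsto u (cocompact ℝ) (cocompact ℝ) := by
  rw [cocompact_eq_atBot_atTop]
  exact hbot.sup_sup htop

theorem integral_deriv_smul_comp_of_tendsto {E : Type*} [NormedAddCommGroup E] [NormedSpace ℝ E]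
    [CompleteSpace E] {u u' : ℝ → ℝ} {φ : ℝ → E} (hu : ∀ x, HasDerivAt u (u' x) x)
    (hbot : Tendsto u atBot atBot) (htop : Tendsto u atTop atTop) (hφ : Continuous φ)
    (hφi : Integrable φ) (hint : Integrable fun x => u' x • φ (u x)) :
    ∫ x, u' x • φ (u x) = ∫ x, φ x := by
  have hprim : ∀ x, HasDerivAt (fun y => ∫ t in (0 : ℝ)..u y, φ t) (u' x • φ (u x)) x := fun x =>
    (hφ.integral_hasStrictDerivAt 0 (u x)).hasDerivAt.scomp x (hu x)
  have hprim_top : Tendsto (fun y => ∫ t in (0 : ℝ)..u y, φ t) atTop (𝓝 (∫ t in Set.Ioi 0, φ t)) :=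
    intervalIntegral_tendsto_integral_Ioi 0 hφi.integrableOn htop
  have hprim_bot :
      Tendsto (fun y => ∫ t in (0 : ℝ)..u y, φ t) atBot (𝓝 (-∫ t in Set.Iic 0, φ t)) := by
    refine (intervalIntegral_tendsto_integral_Iic 0 hφi.integrableOn hbot).neg.congr fun y => ?_
    rw [intervalIntegral.integral_symm, neg_neg]
  rw [integral_of_hasDerivAt_of_tendsto hprim hint hprim_bot hprim_top, sub_neg_eq_add, add_comm,
    intervalIntegral.integral_Iic_add_Ioi hφi.integrableOn hφi.integrableOn]

/-- Integration by parts identity: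
`∫ g′(y) φ(y + g(y)) dy = ∫ φ(s) ds − ∫ φ(y + g(y)) dy`. -/
theorem integral_deriv_mul_comp_eq_sub
    (g : ℝ → ℝ) (hg : ContDiff ℝ 1 g)
    (hg0 : Tendsto g (cocompact ℝ) (nhds 0))
    (φ : ℝ → ℝ) (hφ : Continuous φ) (hφc : HasCompactSupport φ) :
    ∫ y : ℝ, deriv g y * φ (y + g y)
      = (∫ s : ℝ, φ s) - ∫ y : ℝ, φ (y + g y) := by
  have hu : ∀ y, HasDerivAt (fun y => y + g y) (1 + deriv g y) y := fun y =>
    (hasDerivAt_id y).add (hg.differentiable one_ne_zero y).hasDerivAt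
  have hbot : Tendsto (fun y => y + g y) atBot atBot :=
    tendsto_id.atBot_add (hg0.mono_left atBot_le_cocompact)
  have htop : Tendsto (fun y => y + g y) atTop atTop :=
    tendsto_id.atTop_add (hg0.mono_left atTop_le_cocompact)
  have hsupp : HasCompactSupport fun y => φ (y + g y) :=
    hφc.comp_tendsto_cocompact (Real.tendsto_cocompact_of_tendsto_atBot_atTop hbot htop)
  have hcont : Continuous fun y => φ (y + g y) := hφ.comp (continuous_id.add hg.continuous)
  have hint : Integrable fun y => φ (y + g y) := hcont.integrable_of_hasCompactSupport hsupp
  have hint' : Integrable fun y => deriv g y * φ (y + g y) :=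
    ((hg.continuous_deriv le_rfl).mul hcont).integrable_of_hasCompactSupport hsupp.mul_left
  have hcov := integral_deriv_smul_comp_of_tendsto hu hbot htop hφ
    (hφ.integrable_of_hasCompactSupport hφc)
    (by simp_rw [smul_eq_mul, add_mul, one_mul]; exact hint.add hint')
  simp only [smul_eq_mul, add_mul, one_mul] at hcov
  rw [integral_add hint hint'] at hcov
  linarith
end
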